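/- (Proposition 2.1, part on G, for κ ≤ 0) Let κ ≤ 0, let n ≥ 2 be an integer, and let F solve the ODE of the paper with F(0) = 0, F'(0) = 1. Define G(r) := 2 F(r) F'(r) + (n−1)(sn_κ'(r)/sn_κ(r)) F(r)². Then G is non-negative and non-decreasing on (0,∞). -/

import Mathlib

open Set

/-- The comparison sine function `sn_κ` for `κ ≤ 0`: `sn_0(t) = t` and
`sn_κ(t) = sinh(√(-κ) t)/√(-κ)` for `κ < 0`. -/
noncomputable def snk (κ : ℝ) (t : ℝ) : ℝ :=
  if κ = 0 then t else Real.sinh (Real.sqrt (-κ) * t) / Real.sqrt (-κ)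

/-! Differentiating `G` and eliminating `F''` with the ODE and `cs_κ² + κ sn_κ² = 1` gives
`G' = 2 F'² + (n-1) F² / sn_κ² ≥ 0`, so `G` is non-decreasing; it is non-negative because
each of its terms is. -/

/-- The comparison cosine `cs_κ = sn_κ'`. -/
noncomputable def csk (κ : ℝ) (t : ℝ) : ℝ :=
  if κ = 0 then 1 else Real.cosh (Real.sqrt (-κ) * t)

section Comparison

variable {κ : ℝ}

lemma snk_zero : snk 0 = id := funext fun _ => if_pos rfl

lemma csk_zero : csk 0 = fun _ => 1 := funext fun _ => if_pos rfl

lemma snk_of_neg (hκ : κ < 0) :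
    snk κ = fun t => Real.sinh (Real.sqrt (-κ) * t) / Real.sqrt (-κ) :=
  funext fun _ => if_neg hκ.ne

lemma csk_of_neg (hκ : κ < 0) : csk κ = fun t => Real.cosh (Real.sqrt (-κ) * t) :=
  funext fun _ => if_neg hκ.ne

lemma hasDerivAt_snk (hκ : κ ≤ 0) (t : ℝ) : HasDerivAt (snk κ) (csk κ t) t := by
  rcases hκ.eq_or_lt with rfl | hκ
  · simpa [snk_zero, csk_zero] using hasDerivAt_id t
  · have hc : Real.sqrt (-κ) ≠ 0 := (Real.sqrt_pos.2 (neg_pos.2 hκ)).ne'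
    rw [snk_of_neg hκ, csk_of_neg hκ]
    refine ((((hasDerivAt_id' t).const_mul (Real.sqrt (-κ))).sinh).div_const _).congr_deriv ?_
    field_simp

lemma hasDerivAt_csk (hκ : κ ≤ 0) (t : ℝ) : HasDerivAt (csk κ) (-κ * snk κ t) t := by
  rcases hκ.eq_or_lt with rfl | hκ
  · simpa [csk_zero] using hasDerivAt_const t (1 : ℝ)
  · have hc : Real.sqrt (-κ) ≠ 0 := (Real.sqrt_pos.2 (neg_pos.2 hκ)).ne'
    have hc2 : Real.sqrt (-κ) ^ 2 = -κ := Real.sq_sqrt (neg_nonneg.2 hκ.le)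
    rw [snk_of_neg hκ, csk_of_neg hκ]
    refine (((hasDerivAt_id' t).const_mul (Real.sqrt (-κ))).cosh).congr_deriv ?_
    field_simp
    linear_combination Real.sinh (Real.sqrt (-κ) * t) * hc2

lemma csk_sq_add_mul_snk_sq (hκ : κ ≤ 0) (t : ℝ) : csk κ t ^ 2 + κ * snk κ t ^ 2 = 1 := by
  rcases hκ.eq_or_lt with rfl | hκ
  · simp [csk_zero]
  · have hc : Real.sqrt (-κ) ≠ 0 := (Real.sqrt_pos.2 (neg_pos.2 hκ)).ne'
    have hc2 : Real.sqrt (-κ) ^ 2 = -κ := Real.sq_sqrt (neg_nonneg.2 hκ.le)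
    rw [snk_of_neg hκ, csk_of_neg hκ]
    field_simp
    linear_combination (-κ) * Real.cosh_sq_sub_sinh_sq (Real.sqrt (-κ) * t)
      + (Real.cosh (Real.sqrt (-κ) * t) ^ 2 - 1) * hc2

lemma deriv_snk (hκ : κ ≤ 0) : deriv (snk κ) = csk κ :=
  funext fun t => (hasDerivAt_snk hκ t).deriv

lemma snk_pos (hκ : κ ≤ 0) {t : ℝ} (ht : 0 < t) : 0 < snk κ t := by
  rcases hκ.eq_or_lt with rfl | hκ
  · rwa [snk_zero]
  · have hc : 0 < Real.sqrt (-κ) := Real.sqrt_pos.2 (neg_pos.2 hκ)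
    rw [snk_of_neg hκ]
    exact div_pos (Real.sinh_pos_iff.2 (mul_pos hc ht)) hc

lemma csk_pos (κ t : ℝ) : 0 < csk κ t := by
  unfold csk
  split_ifs
  exacts [one_pos, Real.cosh_pos _]

/-- The paper's `G`, with `m = n - 1` and `F'` standing for the derivative of `F`. -/
noncomputable def radialEnergy (κ m : ℝ) (F F' : ℝ → ℝ) (t : ℝ) : ℝ :=
  2 * F t * F' t + m * (csk κ t / snk κ t) * F t ^ 2

lemma hasDerivAt_radialEnergy (hκ : κ ≤ 0) (m : ℝ) {F F' : ℝ → ℝ} {F'' r : ℝ} (hr : snk κ r ≠ 0)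
    (hF : HasDerivAt F (F' r) r) (hF' : HasDerivAt F' F'' r)
    (hODE : F'' + m * (csk κ r / snk κ r) * F' r - m / snk κ r ^ 2 * F r = 0) :
    HasDerivAt (radialEnergy κ m F F') (2 * F' r ^ 2 + m * F r ^ 2 / snk κ r ^ 2) r := by
  have hquot := (hasDerivAt_csk hκ r).div (hasDerivAt_snk hκ r) hr
  refine (((hF.const_mul 2).mul hF').add ((hquot.const_mul m).mul (hF.pow 2))).congr_deriv ?_
  have hF'' : F'' = m / snk κ r ^ 2 * F r - m * (csk κ r / snk κ r) * F' r := by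
    linear_combination hODE
  rw [hF'', Pi.div_apply, Pi.pow_apply]
  field_simp
  linear_combination (-(F r ^ 2) * m) * csk_sq_add_mul_snk_sq hκ r

end Comparison

lemma hasDerivAt_deriv_of_contDiffOn_two {F : ℝ → ℝ} {s : Set ℝ} (hs : IsOpen s)
    (hF : ContDiffOn ℝ 2 F s) {r : ℝ} (hr : r ∈ s) :
    HasDerivAt F (deriv F r) r ∧ HasDerivAt (deriv F) (deriv (deriv F) r) r :=
  ⟨((hF.differentiableOn (by norm_num)).differentiableAt (hs.mem_nhds hr)).hasDerivAt,
    (((hF.deriv_of_isOpen (m := 1) hs (by norm_num)).differentiableOn one_ne_zero).differentiableAt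
      (hs.mem_nhds hr)).hasDerivAt⟩

theorem G_nonneg_monotone_general
    (κ : ℝ) (hκ : κ ≤ 0) (n : ℕ) (hn : 2 ≤ n) (F : ℝ → ℝ)
    (hF2 : ContDiffOn ℝ 2 F (Ioi 0))
    (hODE : ∀ r > 0, deriv (deriv F) r
      + ((n : ℝ) - 1) * (deriv (snk κ) r / snk κ r) * deriv F r
      - (((n : ℝ) - 1) / (snk κ r) ^ 2) * F r = 0)
    (hFpos : ∀ r > 0, 0 < F r) (hF'pos : ∀ r > 0, 0 < deriv F r)
    (G : ℝ → ℝ)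
    (hG : ∀ r, G r = 2 * F r * deriv F r + ((n : ℝ) - 1) * (deriv (snk κ) r / snk κ r) * (F r) ^ 2) :
    (∀ r > 0, 0 ≤ G r) ∧ MonotoneOn G (Ioi 0) := by
  have hm : (0 : ℝ) ≤ n - 1 := by
    have : (2 : ℝ) ≤ n := by exact_mod_cast hn
    linarith
  rw [deriv_snk hκ] at hODE hG
  have hG' : ∀ r > 0, HasDerivAt G (2 * deriv F r ^ 2 + (n - 1) * F r ^ 2 / snk κ r ^ 2) r := by
    intro r hr
    obtain ⟨hF, hF'⟩ := hasDerivAt_deriv_of_contDiffOn_two isOpen_Ioi hF2 hr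
    rw [show G = radialEnergy κ (n - 1) F (deriv F) from funext hG]
    exact hasDerivAt_radialEnergy hκ _ (snk_pos hκ hr).ne' hF hF' (hODE r hr)
  refine ⟨fun r hr => ?_, ?_⟩
  · have := div_pos (csk_pos κ r) (snk_pos hκ hr)
    have := hFpos r hr
    have := hF'pos r hr
    rw [hG]
    positivity
  · refine monotoneOn_of_hasDerivWithinAt_nonneg (convex_Ioi 0)
      (fun r hr => (hG' r hr).continuousAt.continuousWithinAt)
      (fun r hr => (hG' r (interior_subset hr)).hasDerivWithinAt) fun r _ => ?_
    positivity

/-- Proposition 2.1 (part on `G`), for `κ ≤ 0`: the function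
`G(r) = (F²)'(r) + (n-1)(sn_κ'/sn_κ)(r) F(r)²` is non-negative and non-decreasing on `(0,∞)`. -/
theorem G_nonneg_monotone
    (κ : ℝ) (hκ : κ ≤ 0) (n : ℕ) (hn : 2 ≤ n) (F : ℝ → ℝ)
    (hFc : ContinuousOn F (Ici 0))
    (hF2 : ContDiffOn ℝ 2 F (Ioi 0))
    (hF0 : F 0 = 0)
    (hF'0 : HasDerivWithinAt F 1 (Ici 0) 0)
    (hODE : ∀ r > 0, deriv (deriv F) r
      + ((n : ℝ) - 1) * (deriv (snk κ) r / snk κ r) * deriv F r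
      - (((n : ℝ) - 1) / (snk κ r) ^ 2) * F r = 0)
    (hFpos : ∀ r > 0, 0 < F r) (hF'pos : ∀ r > 0, 0 < deriv F r)
    (G : ℝ → ℝ)
    (hG : ∀ r, G r = 2 * F r * deriv F r + ((n : ℝ) - 1) * (deriv (snk κ) r / snk κ r) * (F r) ^ 2) :
    (∀ r > 0, 0 ≤ G r) ∧ MonotoneOn G (Ioi 0) :=
  G_nonneg_monotone_general κ hκ n hn F hF2 hODE hFpos hF'pos G hG
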